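/- arXiv:2208.06357 — 5 statements merged into one kernel-verified Lean document; each statement's English description precedes it below -/
import Mathlib

section
/- If C is a cycle in Γ with no exit, then in L_k(Γ) one has C C* = s(C) = C* C. -/
/-! Preamble: digraphs, paths, and Leavitt path algebras over a commutative ring. -/

structure DGraph : Type 1 where
  V : Type
  E : Type
  s : E → V
  t : E → V

namespace DGraph

/-- Generators of the Leavitt path algebra: vertices, arrows, ghost (dual) arrows. -/
inductive Gen (Γ : DGraph) : Type
  | vert : Γ.V → Gen Γ
  | edge : Γ.E → Gen Γ
  | ghost : Γ.E → Gen Γ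

variable (Γ : DGraph)

def IsSink (v : Γ.V) : Prop := ∀ e : Γ.E, Γ.s e ≠ v

def RowFinite : Prop := ∀ v : Γ.V, {e : Γ.E | Γ.s e = v}.Finite

/-- `IsWalkFrom v l` : the list of arrows `l` forms a path starting at `v`. -/
def IsWalkFrom : Γ.V → List Γ.E → Prop
  | _, [] => True
  | v, e :: l => Γ.s e = v ∧ IsWalkFrom (Γ.t e) l

/-- Target of a walk. -/
def walkTrg : Γ.V → List Γ.E → Γ.V
  | v, [] => v
  | _, e :: l => walkTrg (Γ.t e) l

/-- A (finite) path in `Γ`: a source vertex together with a compatible list of arrows.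
A path of length 0 is a single vertex. -/
structure Path (Γ : DGraph) : Type where
  src : Γ.V
  edges : List Γ.E
  valid : Γ.IsWalkFrom src edges

variable {Γ}

def Path.trg (p : Path Γ) : Γ.V := Γ.walkTrg p.src p.edges

/-- `q` is an initial segment of `p`, i.e. `p = q r`. -/
def IsInitialSegment (q p : Path Γ) : Prop := p.src = q.src ∧ q.edges <+: p.edges

/-- A cycle: a path of positive length from a vertex back to itself with pairwise
distinct sources of its arrows. -/
def Path.IsCycle (p : Path Γ) : Prop :=
  p.edges ≠ [] ∧ p.trg = p.src ∧ (p.edges.map Γ.s).Nodup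

/-- The vertex `v` is on the path `p`. -/
def Path.OnPath (p : Path Γ) (v : Γ.V) : Prop := p.src = v ∨ ∃ e ∈ p.edges, Γ.t e = v

/-- The path `p` has no exit: every arrow whose source is on `p` is an arrow of `p`. -/
def NoExit (p : Path Γ) : Prop := ∀ f : Γ.E, p.OnPath (Γ.s f) → f ∈ p.edges

variable (Γ)

/-- There is a path from `u` to `v`. -/
def Reaches (u v : Γ.V) : Prop := ∃ p : Path Γ, p.src = u ∧ p.trg = v

/-- The cycles of `Γ` are pairwise disjoint: two cycles sharing a vertex coincide
(up to rotation, i.e. they have the same arrows). -/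
def CyclesPairwiseDisjoint : Prop :=
  ∀ C D : Path Γ, C.IsCycle → D.IsCycle → (∃ v, C.OnPath v ∧ D.OnPath v) →
    C.edges.Perm D.edges

def Hereditary (H : Set Γ.V) : Prop := ∀ u v : Γ.V, u ∈ H → Γ.Reaches u v → v ∈ H

def Saturated (H : Set Γ.V) : Prop :=
  ∀ v : Γ.V, ¬ Γ.IsSink v → {e : Γ.E | Γ.s e = v}.Finite →
    (∀ e : Γ.E, Γ.s e = v → Γ.t e ∈ H) → v ∈ H

/-- The full subgraph of `Γ` on a set `W` of vertices. -/
abbrev restrict (W : Set Γ.V) : DGraph where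
  V := W
  E := {e : Γ.E // Γ.s e ∈ W ∧ Γ.t e ∈ W}
  s e := ⟨Γ.s e.1, e.2.1⟩
  t e := ⟨Γ.t e.1, e.2.2⟩

/-- The defining relations of the Leavitt path algebra, as a relation on the free
algebra on the generators: (V), (E), (CK1) and (CK2) (the latter imposed at every
vertex which is not a sink and emits finitely many arrows). -/
inductive LRel (k : Type) [CommRing k] (Γ : DGraph) :
    FreeAlgebra k (Gen Γ) → FreeAlgebra k (Gen Γ) → Prop
  | vert_idem (v : Γ.V) :
      LRel k Γ (FreeAlgebra.ι k (Gen.vert v) * FreeAlgebra.ι k (Gen.vert v))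
        (FreeAlgebra.ι k (Gen.vert v))
  | vert_orth (v w : Γ.V) : v ≠ w →
      LRel k Γ (FreeAlgebra.ι k (Gen.vert v) * FreeAlgebra.ι k (Gen.vert w)) 0
  | edge_src (e : Γ.E) :
      LRel k Γ (FreeAlgebra.ι k (Gen.vert (Γ.s e)) * FreeAlgebra.ι k (Gen.edge e))
        (FreeAlgebra.ι k (Gen.edge e))
  | edge_trg (e : Γ.E) :
      LRel k Γ (FreeAlgebra.ι k (Gen.edge e) * FreeAlgebra.ι k (Gen.vert (Γ.t e)))
        (FreeAlgebra.ι k (Gen.edge e))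
  | ghost_src (e : Γ.E) :
      LRel k Γ (FreeAlgebra.ι k (Gen.vert (Γ.t e)) * FreeAlgebra.ι k (Gen.ghost e))
        (FreeAlgebra.ι k (Gen.ghost e))
  | ghost_trg (e : Γ.E) :
      LRel k Γ (FreeAlgebra.ι k (Gen.ghost e) * FreeAlgebra.ι k (Gen.vert (Γ.s e)))
        (FreeAlgebra.ι k (Gen.ghost e))
  | ck1_same (e : Γ.E) :
      LRel k Γ (FreeAlgebra.ι k (Gen.ghost e) * FreeAlgebra.ι k (Gen.edge e))
        (FreeAlgebra.ι k (Gen.vert (Γ.t e)))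
  | ck1_diff (e f : Γ.E) : e ≠ f →
      LRel k Γ (FreeAlgebra.ι k (Gen.ghost e) * FreeAlgebra.ι k (Gen.edge f)) 0
  | ck2 (v : Γ.V) (h : {e : Γ.E | Γ.s e = v}.Finite) (hns : ¬ Γ.IsSink v) :
      LRel k Γ (FreeAlgebra.ι k (Gen.vert v))
        (∑ e ∈ h.toFinset, FreeAlgebra.ι k (Gen.edge e) * FreeAlgebra.ι k (Gen.ghost e))

/-- The (unitized) Leavitt path algebra of `Γ` over `k`.  For a digraph with finitely
many vertices, see `LVF` below where additionally `1 = Σ v` is imposed; in general the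
Leavitt path algebra proper is the (non-unital) subalgebra spanned by the nonempty
words in the generators, cf. `lpa`. -/
abbrev LV (k : Type) [CommRing k] (Γ : DGraph) : Type := RingQuot (LRel k Γ)

/-- The image of a generator in the Leavitt path algebra. -/
def genL (k : Type) [CommRing k] (Γ : DGraph) (g : Gen Γ) : LV k Γ :=
  RingQuot.mkAlgHom k (LRel k Γ) (FreeAlgebra.ι k g)

/-- For `Γ` with finitely many vertices, the relations of the Leavitt path algebra
together with `1 = Σ_{v ∈ V} v`. -/
def LRelU (k : Type) [CommRing k] (Γ : DGraph) [Fintype Γ.V] :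
    FreeAlgebra k (Gen Γ) → FreeAlgebra k (Gen Γ) → Prop :=
  fun a b => LRel k Γ a b ∨
    (a = 1 ∧ b = ∑ v : Γ.V, FreeAlgebra.ι k (Gen.vert v))

/-- The Leavitt path algebra of a digraph with finitely many vertices (a unital
algebra, with `1 = Σ_{v ∈ V} v`). -/
abbrev LVF (k : Type) [CommRing k] (Γ : DGraph) [Fintype Γ.V] : Type :=
  RingQuot (LRelU k Γ)

def genF (k : Type) [CommRing k] (Γ : DGraph) [Fintype Γ.V] (g : Gen Γ) : LVF k Γ :=
  RingQuot.mkAlgHom k (LRelU k Γ) (FreeAlgebra.ι k g)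

section Words

variable {k : Type} [CommRing k] {A : Type} [Ring A]

/-- The element `v e₁ ⋯ e_n` of an algebra `A`, given an interpretation `g` of the
generators. -/
def wordElem (g : Gen Γ → A) (v : Γ.V) (l : List Γ.E) : A :=
  g (Gen.vert v) * (l.map fun e => g (Gen.edge e)).prod

/-- The element `e_n* ⋯ e₁* v`. -/
def wordStar (g : Gen Γ → A) (v : Γ.V) (l : List Γ.E) : A :=
  (l.reverse.map fun e => g (Gen.ghost e)).prod * g (Gen.vert v)

variable {Γ}

/-- The element of the algebra corresponding to a path `p`. -/
def pElem (g : Gen Γ → A) (p : Path Γ) : A := wordElem Γ g p.src p.edges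

/-- The element of the algebra corresponding to the dual path `p*`. -/
def pStar (g : Gen Γ → A) (p : Path Γ) : A := wordStar Γ g p.src p.edges

/-- `Cⁿ` for `n ∈ ℤ`, with `C⁰ := s(C)` and `C⁻ⁿ := (C*)ⁿ`. -/
def cycPow (g : Gen Γ → A) (C : Path Γ) (n : ℤ) : A :=
  if n = 0 then g (Gen.vert C.src)
  else if 0 < n then pElem g C ^ n.toNat
  else pStar g C ^ (-n).toNat

end Words

/-- The k-submodule of the unitized algebra `LV k Γ` spanned by the nonempty words
in the generators: this is the Leavitt path algebra proper (a two-sided ideal). -/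
def lpa (k : Type) [CommRing k] (Γ : DGraph) : Submodule k (LV k Γ) :=
  Submodule.span k
    {x : LV k Γ | ∃ l : List (Gen Γ), l ≠ [] ∧ x = (l.map (genL k Γ)).prod}

/-- The image of the path algebra `kΓ` in `LV k Γ`: the k-span of the paths. -/
def pathSpan (k : Type) [CommRing k] (Γ : DGraph) : Submodule k (LV k Γ) :=
  Submodule.span k (Set.range (pElem (genL k Γ)))

/-- The right ideal generated by an element `a` of a ring `A` (a submodule for the
right action of `A`, i.e. an `Aᵐᵒᵖ`-submodule). -/
def rIdeal (A : Type) [Ring A] (a : A) : Submodule Aᵐᵒᵖ A :=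
  Submodule.span Aᵐᵒᵖ {a}

/-- A right `LV k Γ`-module (i.e. left `(LV k Γ)ᵐᵒᵖ`-module) is unital if
`M = M ⬝ L(Γ)`, equivalently every element is a finite sum of elements of `M·v·L`. -/
def IsUnitalMod (k : Type) [CommRing k] (Γ : DGraph) (M : Type) [AddCommGroup M]
    [Module (LV k Γ)ᵐᵒᵖ M] : Prop :=
  ∀ m : M, m ∈ Submodule.span (LV k Γ)ᵐᵒᵖ
    {x : M | ∃ (v : Γ.V) (y : M), x = (MulOpposite.op (genL k Γ (Gen.vert v))) • y}

/-- One-step reduction of `Γ` at a loopless vertex `v`: paths of length two through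
`v` become new arrows, and `v` together with all arrows touching it is deleted. -/
abbrev reduceAt (v : Γ.V) (hl : ∀ e : Γ.E, Γ.s e = v → Γ.t e ≠ v) : DGraph where
  V := {u : Γ.V // u ≠ v}
  E := {e : Γ.E // Γ.s e ≠ v ∧ Γ.t e ≠ v} ⊕
       {fg : Γ.E × Γ.E // Γ.t fg.1 = v ∧ Γ.s fg.2 = v}
  s := fun x => match x with
    | Sum.inl e => ⟨Γ.s e.1, e.2.1⟩
    | Sum.inr fg => ⟨Γ.s fg.1.1, fun h => hl fg.1.1 h fg.2.1⟩
  t := fun x => match x with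
    | Sum.inl e => ⟨Γ.t e.1, e.2.2⟩
    | Sum.inr fg => ⟨Γ.t fg.1.2, fun h => hl fg.1.2 fg.2.2 h⟩

/-- The homogeneous component of degree `g` of `LV k Γ` with respect to a degree
assignment `d` on the generators, with values in a group `G`. -/
def gcomp (k : Type) [CommRing k] (Γ : DGraph) {G : Type} [Group G]
    (d : Gen Γ → G) (g : G) : Submodule k (LV k Γ) :=
  Submodule.span k
    {x : LV k Γ | ∃ l : List (Gen Γ), (l.map d).prod = g ∧ x = (l.map (genL k Γ)).prod}

/-- The universal degree assignment, with values in the free group on the arrows. -/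
def dUniv (Γ : DGraph) : Gen Γ → FreeGroup Γ.E
  | Gen.vert _ => 1
  | Gen.edge e => FreeGroup.of e
  | Gen.ghost e => (FreeGroup.of e)⁻¹

end DGraph

/-- Gelfand–Kirillov dimension of an `F`-algebra (value in `ℝ≥0∞`):
`limsup_n log dim(Wⁿ)/log n` for a finite-dimensional generating subspace `W`
containing `1` (the supremum is taken over all such `W`; for a finitely generated
algebra the value does not depend on the choice). -/
noncomputable def gkDim (F A : Type) [Field F] [Ring A] [Algebra F A] : ENNReal :=
  ⨆ W : {W : Submodule F A //
      FiniteDimensional F W ∧ (1 : A) ∈ W ∧ ∀ x : A, ∃ n : ℕ, x ∈ (W : Submodule F A) ^ n},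
    Filter.limsup (fun n : ℕ =>
      ENNReal.ofReal
        (Real.log (Module.finrank F ↥((W : Submodule F A) ^ n)) / Real.log n))
      Filter.atTop

/-- A module is indecomposable if it is nonzero and admits no nontrivial direct sum
decomposition. -/
def IsIndecomposableModule (R M : Type) [Ring R] [AddCommGroup M] [Module R M] : Prop :=
  Nontrivial M ∧ ∀ A B : Submodule R M, IsCompl A B → A = ⊥ ∨ B = ⊥

/-!
Every vertex of a cycle `C` without exit lies on `C`, so, the sources of the arrows of `C` being
distinct, the arrow `e` of `C` leaving `s(e)` is the only arrow emitted there and (CK2) reads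
`e e* = s(e)`. Hence `C C*` collapses from the middle outwards to `s(C)`, while `C* C` collapses
by (CK1) alone to `r(C) = s(C)`.
-/

namespace DGraph

variable {k : Type} [CommRing k] {Γ : DGraph}

theorem genL_vert_mul_self (v : Γ.V) :
    genL k Γ (Gen.vert v) * genL k Γ (Gen.vert v) = genL k Γ (Gen.vert v) := by
  simpa only [genL, map_mul] using RingQuot.mkAlgHom_rel k (LRel.vert_idem (k := k) v)

theorem genL_vert_src_mul_edge (e : Γ.E) :
    genL k Γ (Gen.vert (Γ.s e)) * genL k Γ (Gen.edge e) = genL k Γ (Gen.edge e) := by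
  simpa only [genL, map_mul] using RingQuot.mkAlgHom_rel k (LRel.edge_src (k := k) e)

theorem genL_edge_mul_vert_trg (e : Γ.E) :
    genL k Γ (Gen.edge e) * genL k Γ (Gen.vert (Γ.t e)) = genL k Γ (Gen.edge e) := by
  simpa only [genL, map_mul] using RingQuot.mkAlgHom_rel k (LRel.edge_trg (k := k) e)

theorem genL_vert_trg_mul_ghost (e : Γ.E) :
    genL k Γ (Gen.vert (Γ.t e)) * genL k Γ (Gen.ghost e) = genL k Γ (Gen.ghost e) := by
  simpa only [genL, map_mul] using RingQuot.mkAlgHom_rel k (LRel.ghost_src (k := k) e)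

theorem genL_ghost_mul_vert_src (e : Γ.E) :
    genL k Γ (Gen.ghost e) * genL k Γ (Gen.vert (Γ.s e)) = genL k Γ (Gen.ghost e) := by
  simpa only [genL, map_mul] using RingQuot.mkAlgHom_rel k (LRel.ghost_trg (k := k) e)

theorem genL_ghost_mul_edge (e : Γ.E) :
    genL k Γ (Gen.ghost e) * genL k Γ (Gen.edge e) = genL k Γ (Gen.vert (Γ.t e)) := by
  simpa only [genL, map_mul] using RingQuot.mkAlgHom_rel k (LRel.ck1_same (k := k) e)

theorem genL_edge_mul_ghost_of_unique {e : Γ.E} (huniq : ∀ f, Γ.s f = Γ.s e → f = e) :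
    genL k Γ (Gen.edge e) * genL k Γ (Gen.ghost e) = genL k Γ (Gen.vert (Γ.s e)) := by
  have hemit : {f : Γ.E | Γ.s f = Γ.s e} = {e} :=
    Set.eq_singleton_iff_unique_mem.mpr ⟨rfl, huniq⟩
  have hfin : {f : Γ.E | Γ.s f = Γ.s e}.Finite := hemit ▸ Set.finite_singleton e
  have hck2 : genL k Γ (Gen.vert (Γ.s e)) =
      ∑ f ∈ hfin.toFinset, genL k Γ (Gen.edge f) * genL k Γ (Gen.ghost f) := by
    simpa only [genL, map_mul, map_sum] using
      RingQuot.mkAlgHom_rel k (LRel.ck2 (k := k) (Γ.s e) hfin fun hsink => hsink e rfl)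
  rw [hck2, show hfin.toFinset = {e} by simp [hemit], Finset.sum_singleton]

theorem wordStar_mul_wordElem {v : Γ.V} {l : List Γ.E} (hl : Γ.IsWalkFrom v l) :
    wordStar Γ (genL k Γ) v l * wordElem Γ (genL k Γ) v l =
      genL k Γ (Gen.vert (Γ.walkTrg v l)) := by
  induction l generalizing v with
  | nil => simp [wordStar, wordElem, walkTrg, genL_vert_mul_self]
  | cons e l ih =>
    obtain ⟨rfl, hl⟩ := hl
    calc wordStar Γ (genL k Γ) (Γ.s e) (e :: l) * wordElem Γ (genL k Γ) (Γ.s e) (e :: l)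
        = (l.reverse.map fun e => genL k Γ (Gen.ghost e)).prod *
            ((genL k Γ (Gen.ghost e) * genL k Γ (Gen.vert (Γ.s e))) *
              (genL k Γ (Gen.vert (Γ.s e)) * genL k Γ (Gen.edge e))) *
            (l.map fun e => genL k Γ (Gen.edge e)).prod := by
          simp only [wordStar, wordElem, List.reverse_cons, List.map_append, List.map_cons,
            List.map_nil, List.prod_append, List.prod_cons, List.prod_nil, mul_one, mul_assoc]
      _ = wordStar Γ (genL k Γ) (Γ.t e) l * wordElem Γ (genL k Γ) (Γ.t e) l := by
          rw [genL_ghost_mul_vert_src, genL_vert_src_mul_edge, genL_ghost_mul_edge,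
            ← genL_vert_mul_self]
          simp only [wordStar, wordElem, mul_assoc]
      _ = _ := ih hl

theorem wordElem_mul_wordStar {v : Γ.V} {l : List Γ.E} (hl : Γ.IsWalkFrom v l)
    (hck2 : ∀ e ∈ l,
      genL k Γ (Gen.edge e) * genL k Γ (Gen.ghost e) = genL k Γ (Gen.vert (Γ.s e))) :
    wordElem Γ (genL k Γ) v l * wordStar Γ (genL k Γ) v l = genL k Γ (Gen.vert v) := by
  induction l generalizing v with
  | nil => simp [wordStar, wordElem, genL_vert_mul_self]
  | cons e l ih =>
    obtain ⟨rfl, hl⟩ := hl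
    have hmid := ih hl fun f hf => hck2 f (List.mem_cons_of_mem e hf)
    calc wordElem Γ (genL k Γ) (Γ.s e) (e :: l) * wordStar Γ (genL k Γ) (Γ.s e) (e :: l)
        = genL k Γ (Gen.vert (Γ.s e)) *
            (genL k Γ (Gen.edge e) *
              ((l.map fun e => genL k Γ (Gen.edge e)).prod *
                (l.reverse.map fun e => genL k Γ (Gen.ghost e)).prod) *
              genL k Γ (Gen.ghost e)) * genL k Γ (Gen.vert (Γ.s e)) := by
          simp only [wordStar, wordElem, List.reverse_cons, List.map_append, List.map_cons,
            List.map_nil, List.prod_append, List.prod_cons, List.prod_nil, mul_one, mul_assoc]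
      _ = genL k Γ (Gen.vert (Γ.s e)) *
            (genL k Γ (Gen.edge e) * genL k Γ (Gen.vert (Γ.t e)) *
              ((l.map fun e => genL k Γ (Gen.edge e)).prod *
                (l.reverse.map fun e => genL k Γ (Gen.ghost e)).prod) *
              (genL k Γ (Gen.vert (Γ.t e)) * genL k Γ (Gen.ghost e))) *
            genL k Γ (Gen.vert (Γ.s e)) := by
          rw [genL_edge_mul_vert_trg, genL_vert_trg_mul_ghost]
      _ = genL k Γ (Gen.vert (Γ.s e)) *
            (genL k Γ (Gen.edge e) *
              (wordElem Γ (genL k Γ) (Γ.t e) l * wordStar Γ (genL k Γ) (Γ.t e) l) *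
              genL k Γ (Gen.ghost e)) * genL k Γ (Gen.vert (Γ.s e)) := by
          simp only [wordElem, wordStar, mul_assoc]
      _ = genL k Γ (Gen.vert (Γ.s e)) := by
          rw [hmid, genL_edge_mul_vert_trg, hck2 e List.mem_cons_self, genL_vert_mul_self,
            genL_vert_mul_self]

theorem Path.onPath_src_of_mem (p : Path Γ) {e : Γ.E} (he : e ∈ p.edges) :
    p.OnPath (Γ.s e) := by
  obtain ⟨v, l, hl⟩ := p
  induction l generalizing v with
  | nil => simp at he
  | cons e' l ih =>
    obtain ⟨rfl, hl⟩ := hl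
    rcases List.mem_cons.mp he with rfl | he
    · exact Or.inl rfl
    · rcases ih (Γ.t e') hl he with h | ⟨f, hf, hft⟩
      · exact Or.inr ⟨e', List.mem_cons_self, h⟩
      · exact Or.inr ⟨f, List.mem_cons_of_mem e' hf, hft⟩

theorem NoExit.eq_of_src_eq {p : Path Γ} (hne : NoExit p) (hnd : (p.edges.map Γ.s).Nodup)
    {e f : Γ.E} (he : e ∈ p.edges) (hf : Γ.s f = Γ.s e) : f = e :=
  List.inj_on_of_nodup_map hnd (hne f (hf ▸ p.onPath_src_of_mem he)) he hf

end DGraph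

open DGraph in
/-- if `C` is a cycle with no exit then `C C* = s(C) = C* C`. -/
theorem cycle_no_exit_mul_star (k : Type) [CommRing k] (Γ : DGraph)
    (C : Path Γ) (hC : C.IsCycle) (hne : NoExit C) :
    pElem (genL k Γ) C * pStar (genL k Γ) C = genL k Γ (Gen.vert C.src) ∧
    pStar (genL k Γ) C * pElem (genL k Γ) C = genL k Γ (Gen.vert C.src) := by
  obtain ⟨-, htrg, hnd⟩ := hC
  refine ⟨wordElem_mul_wordStar C.valid fun e he =>
    genL_edge_mul_ghost_of_unique fun f hf => hne.eq_of_src_eq hnd he hf, ?_⟩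
  rw [pStar, pElem, wordStar_mul_wordElem C.valid]
  exact congrArg (fun v => genL k Γ (Gen.vert v)) htrg
end

section
/- Assigning |v| = 1, |e| = e, |e*| = e⁻¹ defines a grading of L(Γ) by the free group F_E on the arrow set E, and this grading is an initial object in the category of G-gradings of L(Γ) in which all generators V ⊔ E ⊔ E* are homogeneous: for any group H and any H-grading with homogeneous generators, the group homomorphism F_E → H sending e to |e|_H realizes the H-grading as a pushforward of the F_E-grading. -/
/-! The assignment `g ↦ g ⊗ |g|` respects every defining relation of `L(Γ)` as soon as
`|v| = 1` and `|e*| = |e|⁻¹`, so it defines a coaction `L(Γ) → L(Γ)[G]`, which is `x ↦ x ⊗ g`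
on the span of the words of degree `g`. Its `g`-coefficient is a projection onto that span
killing the other ones, and the words span `L(Γ)`; hence any such degree assignment, in
particular the one with values in `F_E`, is a grading. The `H`-degree of a word is the image of
its `F_E`-degree under `e ↦ |e|_H`, so each `H`-component is the sum of the `F_E`-components in
the corresponding fibre. -/

namespace DGraph

variable {k : Type} [CommRing k] {Γ : DGraph} {G : Type} [Group G]

theorem word_mem_gcomp (d : Gen Γ → G) (l : List (Gen Γ)) :
    (l.map (genL k Γ)).prod ∈ gcomp k Γ d (l.map d).prod :=
  Submodule.subset_span ⟨l, rfl, rfl⟩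

theorem adjoin_range_genL : Algebra.adjoin k (Set.range (genL k Γ)) = ⊤ := by
  change Algebra.adjoin k (Set.range (RingQuot.mkAlgHom k (LRel k Γ) ∘ FreeAlgebra.ι k)) = ⊤
  rw [Set.range_comp, ← AlgHom.map_adjoin, FreeAlgebra.adjoin_range_ι, Algebra.map_top,
    AlgHom.range_eq_top]
  exact RingQuot.mkAlgHom_surjective k (LRel k Γ)

theorem iSup_gcomp_eq_top (d : Gen Γ → G) : ⨆ g, gcomp k Γ d g = ⊤ := by
  rw [eq_top_iff, ← Algebra.top_toSubmodule, ← adjoin_range_genL, Algebra.adjoin_eq_span,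
    Submodule.span_le, ← FreeMonoid.mrange_lift]
  rintro _ ⟨w, rfl⟩
  rw [FreeMonoid.lift_apply]
  exact Submodule.mem_iSup_of_mem _ (word_mem_gcomp d w.toList)

theorem gcomp_comp {H : Type} [Group H] (φ : G →* H) (d : Gen Γ → G) (h : H) :
    gcomp k Γ (φ ∘ d) h = ⨆ g ∈ φ ⁻¹' {h}, gcomp k Γ d g := by
  simp only [gcomp, ← Submodule.span_iUnion]
  congr 1
  ext x
  simp [← List.map_map, ← map_list_prod]

variable {d : Gen Γ → G}

section Coaction

variable (hv : ∀ v, d (Gen.vert v) = 1)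
  (he : ∀ e, d (Gen.ghost e) = (d (Gen.edge e))⁻¹)

noncomputable def gradingCoaction : LV k Γ →ₐ[k] MonoidAlgebra (LV k Γ) G :=
  RingQuot.liftAlgHom k ⟨FreeAlgebra.lift k fun g => .single (d g) (genL k Γ g), by
    intro a b r
    -- both sides of each relation are homogeneous of one degree; `hr` matches their coefficients
    have hr := RingQuot.mkAlgHom_rel k r
    induction r <;>
      simp only [genL, map_mul, map_sum, map_zero, FreeAlgebra.lift_ι_apply,
        MonoidAlgebra.single_mul_single, hv, he, mul_one, one_mul, inv_mul_cancel,
        mul_inv_cancel] at hr ⊢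
    all_goals rw [hr]
    all_goals first
      | exact MonoidAlgebra.single_zero _
      | exact map_sum (MonoidAlgebra.singleAddHom 1) _ _⟩

theorem gradingCoaction_genL (g : Gen Γ) :
    gradingCoaction hv he (genL k Γ g) = .single (d g) (genL k Γ g) := by
  rw [genL, gradingCoaction, RingQuot.liftAlgHom_mkAlgHom_apply, FreeAlgebra.lift_ι_apply]
  rfl

theorem gradingCoaction_word (l : List (Gen Γ)) :
    gradingCoaction hv he (l.map (genL k Γ)).prod =
      .single (l.map d).prod (l.map (genL k Γ)).prod := by
  induction l with
  | nil => simp [MonoidAlgebra.one_def]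
  | cons g l ih =>
    simp only [List.map_cons, List.prod_cons, map_mul, ih, gradingCoaction_genL,
      MonoidAlgebra.single_mul_single]

theorem gradingCoaction_of_mem_gcomp {g : G} {x : LV k Γ} (hx : x ∈ gcomp k Γ d g) :
    gradingCoaction hv he x = .single g x := by
  induction hx using Submodule.span_induction with
  | mem x hx =>
    obtain ⟨l, rfl, rfl⟩ := hx
    exact gradingCoaction_word hv he l
  | zero => simp
  | add x y _ _ hx hy => rw [map_add, hx, hy, MonoidAlgebra.single_add]
  | smul c x _ hx => rw [map_smul, hx, MonoidAlgebra.smul_single]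

end Coaction

theorem iSupIndep_gcomp (hv : ∀ v, d (Gen.vert v) = 1)
    (he : ∀ e, d (Gen.ghost e) = (d (Gen.edge e))⁻¹) : iSupIndep (gcomp k Γ d) := by
  intro g
  let π : LV k Γ →ₗ[k] LV k Γ := Finsupp.lapply g ∘ₗ
    (MonoidAlgebra.coeffLinearEquiv k).toLinearMap ∘ₗ (gradingCoaction hv he).toLinearMap
  have hπ {g' : G} {x : LV k Γ} (hx : x ∈ gcomp k Γ d g') : π x = Finsupp.single g' x g := by
    simp [π, gradingCoaction_of_mem_gcomp hv he hx]
  have hker : ⨆ (g') (_ : g' ≠ g), gcomp k Γ d g' ≤ LinearMap.ker π :=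
    iSup₂_le fun g' hg' y hy => by rw [LinearMap.mem_ker, hπ hy, Finsupp.single_eq_of_ne' hg']
  exact Submodule.disjoint_def.2 fun x hx hrest => by simpa [hπ hx] using hker hrest

theorem isInternal_gcomp [DecidableEq G] (hv : ∀ v, d (Gen.vert v) = 1)
    (he : ∀ e, d (Gen.ghost e) = (d (Gen.edge e))⁻¹) : DirectSum.IsInternal (gcomp k Γ d) :=
  (DirectSum.isInternal_submodule_iff_iSupIndep_and_iSup_eq_top _).2
    ⟨iSupIndep_gcomp hv he, iSup_gcomp_eq_top d⟩

theorem lift_dUniv (hv : ∀ v, d (Gen.vert v) = 1)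
    (he : ∀ e, d (Gen.ghost e) = (d (Gen.edge e))⁻¹) (g : Gen Γ) :
    FreeGroup.lift (fun e => d (Gen.edge e)) (dUniv Γ g) = d g := by
  cases g <;> simp [dUniv, hv, he]

end DGraph

open DGraph in
theorem universal_grading_initial_general (k : Type) [CommRing k] (Γ : DGraph)
    {H : Type} [Group H] (dH : Gen Γ → H)
    (h1 : ∀ v : Γ.V, dH (Gen.vert v) = 1)
    (h2 : ∀ e : Γ.E, dH (Gen.ghost e) = (dH (Gen.edge e))⁻¹) :
    (letI := Classical.decEq (FreeGroup Γ.E);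
      DirectSum.IsInternal fun g : FreeGroup Γ.E => gcomp k Γ (dUniv Γ) g) ∧
    ∃ φ : FreeGroup Γ.E →* H,
      (∀ g : Gen Γ, φ (dUniv Γ g) = dH g) ∧
      (∀ h : H, gcomp k Γ dH h = ⨆ g ∈ φ ⁻¹' {h}, gcomp k Γ (dUniv Γ) g) := by
  let := Classical.decEq (FreeGroup Γ.E)
  have hφ := lift_dUniv h1 h2
  refine ⟨isInternal_gcomp (fun _ => rfl) (fun _ => rfl), _, hφ, fun h => ?_⟩
  rw [← gcomp_comp, Function.comp_def, funext hφ]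

open DGraph in
/-- the assignment `|v| = 1`, `|e| = e`, `|e*| = e⁻¹` defines a grading of
`L(Γ)` by the free group on the arrows (the homogeneous components form an internal
direct sum), and this grading is initial: for any group `H` and any `H`-grading with
homogeneous generators (so `|v|_H = 1`, `|e*|_H = |e|_H⁻¹`), the homomorphism
`F_E → H`, `e ↦ |e|_H`, realizes the `H`-grading as a pushforward of the universal
grading. -/
theorem universal_grading_initial (k : Type) [CommRing k] (Γ : DGraph)
    {H : Type} [Group H] (dH : Gen Γ → H)
    (h1 : ∀ v : Γ.V, dH (Gen.vert v) = 1)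
    (h2 : ∀ e : Γ.E, dH (Gen.ghost e) = (dH (Gen.edge e))⁻¹)
    (hgr : letI := Classical.decEq H;
      DirectSum.IsInternal fun h : H => gcomp k Γ dH h) :
    (letI := Classical.decEq (FreeGroup Γ.E);
      DirectSum.IsInternal fun g : FreeGroup Γ.E => gcomp k Γ (dUniv Γ) g) ∧
    ∃ φ : FreeGroup Γ.E →* H,
      (∀ g : Gen Γ, φ (dUniv Γ g) = dH g) ∧
      (∀ h : H, gcomp k Γ dH h = ⨆ g ∈ φ ⁻¹' {h}, gcomp k Γ (dUniv Γ) g) :=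
  universal_grading_initial_general k Γ dH h1 h2
end

section
/- Let Γ be a row-finite digraph, k a commutative unital ring, I an ideal of L_k(Γ), and λ ∈ k. Then the set H = { v ∈ V : λv ∈ I } is hereditary and saturated in Γ. -/
section Aux
open DGraph

variable {k : Type} [CommRing k] {Γ : DGraph}

private lemma lrel_eq {a b : FreeAlgebra k (Gen Γ)} (h : LRel k Γ a b) :
    RingQuot.mkAlgHom k (LRel k Γ) a = RingQuot.mkAlgHom k (LRel k Γ) b :=
  RingQuot.mkAlgHom_rel k h

private lemma genL_vert_idem (v : Γ.V) :
    genL k Γ (Gen.vert v) * genL k Γ (Gen.vert v) = genL k Γ (Gen.vert v) := by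
  simpa [genL, map_mul] using lrel_eq (LRel.vert_idem (k := k) v)

private lemma genL_edge_src (e : Γ.E) :
    genL k Γ (Gen.vert (Γ.s e)) * genL k Γ (Gen.edge e) = genL k Γ (Gen.edge e) := by
  simpa [genL, map_mul] using lrel_eq (LRel.edge_src (k := k) e)

private lemma genL_edge_trg (e : Γ.E) :
    genL k Γ (Gen.edge e) * genL k Γ (Gen.vert (Γ.t e)) = genL k Γ (Gen.edge e) := by
  simpa [genL, map_mul] using lrel_eq (LRel.edge_trg (k := k) e)

private lemma genL_ghost_src (e : Γ.E) :
    genL k Γ (Gen.vert (Γ.t e)) * genL k Γ (Gen.ghost e) = genL k Γ (Gen.ghost e) := by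
  simpa [genL, map_mul] using lrel_eq (LRel.ghost_src (k := k) e)

private lemma genL_ghost_trg (e : Γ.E) :
    genL k Γ (Gen.ghost e) * genL k Γ (Gen.vert (Γ.s e)) = genL k Γ (Gen.ghost e) := by
  simpa [genL, map_mul] using lrel_eq (LRel.ghost_trg (k := k) e)

private lemma genL_ck1 (e : Γ.E) :
    genL k Γ (Gen.ghost e) * genL k Γ (Gen.edge e) = genL k Γ (Gen.vert (Γ.t e)) := by
  simpa [genL, map_mul] using lrel_eq (LRel.ck1_same (k := k) e)

private lemma genL_ck2 (v : Γ.V) (h : {e : Γ.E | Γ.s e = v}.Finite) (hns : ¬ Γ.IsSink v) :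
    genL k Γ (Gen.vert v) =
      ∑ e ∈ h.toFinset, genL k Γ (Gen.edge e) * genL k Γ (Gen.ghost e) := by
  simpa [genL, map_mul, map_sum] using lrel_eq (LRel.ck2 (k := k) v h hns)

private lemma star_mul_elem : ∀ (l : List Γ.E) (v : Γ.V), Γ.IsWalkFrom v l →
    wordStar Γ (genL k Γ) v l * wordElem Γ (genL k Γ) v l =
      genL k Γ (Gen.vert (Γ.walkTrg v l))
  | [], v, _ => by
      simp [wordStar, wordElem, walkTrg, genL_vert_idem]
  | e :: l, v, hw => by
      obtain ⟨hse, hwl⟩ := hw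
      have IH := star_mul_elem l (Γ.t e) hwl
      subst hse
      simp only [wordStar, wordElem, walkTrg, List.reverse_cons, List.map_append,
        List.map_cons, List.map_nil, List.prod_append, List.prod_cons, List.prod_nil,
        mul_one] at IH ⊢
      calc (List.map (fun e => genL k Γ (Gen.ghost e)) l.reverse).prod *
            genL k Γ (Gen.ghost e) * genL k Γ (Gen.vert (Γ.s e)) *
            (genL k Γ (Gen.vert (Γ.s e)) *
              (genL k Γ (Gen.edge e) *
                (List.map (fun e => genL k Γ (Gen.edge e)) l).prod))
          = (List.map (fun e => genL k Γ (Gen.ghost e)) l.reverse).prod *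
            ((genL k Γ (Gen.ghost e) * genL k Γ (Gen.vert (Γ.s e))) *
              ((genL k Γ (Gen.vert (Γ.s e)) * genL k Γ (Gen.edge e)) *
                (List.map (fun e => genL k Γ (Gen.edge e)) l).prod)) := by
            simp [mul_assoc]
        _ = (List.map (fun e => genL k Γ (Gen.ghost e)) l.reverse).prod *
            ((genL k Γ (Gen.ghost e) * genL k Γ (Gen.edge e)) *
              (List.map (fun e => genL k Γ (Gen.edge e)) l).prod) := by
            rw [genL_ghost_trg, genL_edge_src]; simp [mul_assoc]
        _ = (List.map (fun e => genL k Γ (Gen.ghost e)) l.reverse).prod *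
            ((genL k Γ (Gen.vert (Γ.t e)) * genL k Γ (Gen.vert (Γ.t e))) *
              (List.map (fun e => genL k Γ (Gen.edge e)) l).prod) := by
            rw [genL_ck1, genL_vert_idem]
        _ = (List.map (fun e => genL k Γ (Gen.ghost e)) l.reverse).prod *
              genL k Γ (Gen.vert (Γ.t e)) *
            (genL k Γ (Gen.vert (Γ.t e)) *
              (List.map (fun e => genL k Γ (Gen.edge e)) l).prod) := by
            simp [mul_assoc]
        _ = genL k Γ (Gen.vert (Γ.walkTrg (Γ.t e) l)) := IH

private lemma vert_mul_elem (l : List Γ.E) (v : Γ.V) :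
    genL k Γ (Gen.vert v) * wordElem Γ (genL k Γ) v l = wordElem Γ (genL k Γ) v l := by
  simp [wordElem, ← mul_assoc, genL_vert_idem]

end Aux

open DGraph in
/-- for an ideal `I` of `L_k(Γ)` and `λ ∈ k`, the set
`{v ∈ V : λv ∈ I}` is hereditary and saturated. -/
theorem ideal_vertices_hereditary_saturated (k : Type) [CommRing k] (Γ : DGraph)
    (hrf : Γ.RowFinite) (I : TwoSidedIdeal (LV k Γ)) (lam : k) :
    Γ.Hereditary {v : Γ.V | lam • genL k Γ (Gen.vert v) ∈ I} ∧
    Γ.Saturated {v : Γ.V | lam • genL k Γ (Gen.vert v) ∈ I} := by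
  set H := {v : Γ.V | lam • genL k Γ (Gen.vert v) ∈ I} with hH
  constructor
  · rintro u v hu ⟨p, hsrc, htrg⟩
    have hkey : pStar (genL k Γ) p * pElem (genL k Γ) p = genL k Γ (Gen.vert v) := by
      rw [pStar, pElem, star_mul_elem p.edges p.src p.valid]
      rw [show Γ.walkTrg p.src p.edges = p.trg from rfl, htrg]
    have hmem : pStar (genL k Γ) p * (lam • genL k Γ (Gen.vert u)) *
        pElem (genL k Γ) p ∈ I :=
      I.mul_mem_right _ _ (I.mul_mem_left _ _ hu)
    have heq : pStar (genL k Γ) p * (lam • genL k Γ (Gen.vert u)) *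
        pElem (genL k Γ) p = lam • genL k Γ (Gen.vert v) := by
      rw [mul_smul_comm, smul_mul_assoc, mul_assoc, ← hsrc,
        show genL k Γ (Gen.vert p.src) * pElem (genL k Γ) p = pElem (genL k Γ) p from
          vert_mul_elem p.edges p.src, hkey]
    show lam • genL k Γ (Gen.vert v) ∈ I
    rwa [← heq]
  · intro v hns hfin hyp
    show lam • genL k Γ (Gen.vert v) ∈ I
    rw [genL_ck2 v hfin hns, Finset.smul_sum]
    refine I.finsetSum_mem _ _ fun e he => ?_
    have hse : Γ.s e = v := by simpa using (Set.Finite.mem_toFinset hfin).mp he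
    have : lam • (genL k Γ (Gen.edge e) * genL k Γ (Gen.ghost e)) =
        genL k Γ (Gen.edge e) * (lam • genL k Γ (Gen.vert (Γ.t e))) *
          genL k Γ (Gen.ghost e) := by
      rw [mul_smul_comm, smul_mul_assoc, mul_assoc, genL_ghost_src]
    rw [this]
    exact I.mul_mem_right _ _ (I.mul_mem_left _ _ (hyp e hse))
end

section
/- Let Γ be a row-finite digraph, k a commutative unital ring, and H ⊆ V a hereditary saturated subset. Let Γ_{/H} be the full subgraph on V∖H and I = (H) the two-sided ideal of L_k(Γ) generated by H. Then L_k(Γ_{/H}) ≅ L_k(Γ)/I as ℤ-graded *-algebras. -/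
section QHAux

open DGraph

variable {k : Type} [CommRing k] {Γ : DGraph} {H : Set Γ.V}

lemma QH_hered_edge (hh : Γ.Hereditary H) (e : Γ.E) (h : Γ.s e ∈ H) : Γ.t e ∈ H :=
  hh _ _ h ⟨⟨Γ.s e, [e], ⟨rfl, trivial⟩⟩, rfl, rfl⟩

open Classical in
/-- The generator map for the quotient morphism. -/
noncomputable def QHfgen (k : Type) [CommRing k] (Γ : DGraph) (H : Set Γ.V) :
    Gen Γ → LV k (Γ.restrict {v : Γ.V | v ∉ H})
  | .vert v => if h : v ∈ H then 0 else genL k _ (.vert ⟨v, h⟩)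
  | .edge e => if h : Γ.s e ∉ H ∧ Γ.t e ∉ H then genL k _ (.edge ⟨e, h⟩) else 0
  | .ghost e => if h : Γ.s e ∉ H ∧ Γ.t e ∉ H then genL k _ (.ghost ⟨e, h⟩) else 0

/-- Transfer of sums over arrows emitted at `v ∉ H`. -/
lemma QH_sum_edges {A : Type} [AddCommMonoid A] {v : Γ.V} (hv : v ∉ H)
    (h : {e : Γ.E | Γ.s e = v}.Finite)
    (h' : {e' : (Γ.restrict {v : Γ.V | v ∉ H}).E | (Γ.restrict {v : Γ.V | v ∉ H}).s e' = ⟨v, hv⟩}.Finite)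
    (F : Γ.E → A) (G : (Γ.restrict {v : Γ.V | v ∉ H}).E → A)
    (hF : ∀ e, Γ.s e = v → Γ.t e ∈ H → F e = 0)
    (hFG : ∀ e', F e'.1 = G e') :
    ∑ e ∈ h.toFinset, F e = ∑ e' ∈ h'.toFinset, G e' := by
  classical
  rw [← Finset.sum_filter_of_ne (p := fun e => Γ.t e ∉ H)
    (fun e he hne => by
      by_contra ht
      exact hne (hF e (h.mem_toFinset.mp he) ht))]
  refine Finset.sum_bij' (fun e he => (⟨e, ?_, ?_⟩ : (Γ.restrict {v : Γ.V | v ∉ H}).E)) (fun e' _ => e'.1)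
    ?_ ?_ ?_ ?_ ?_
  · show Γ.s e ∉ H
    have := (Finset.mem_filter.mp he).1
    rw [h.mem_toFinset] at this
    rw [this]; exact hv
  · exact (Finset.mem_filter.mp he).2
  · intro e he
    rw [h'.mem_toFinset]
    exact Subtype.ext ((h.mem_toFinset.mp (Finset.mem_filter.mp he).1))
  · intro e' he'
    rw [h'.mem_toFinset] at he'
    rw [Finset.mem_filter, h.mem_toFinset]
    exact ⟨congrArg Subtype.val he', e'.2.2⟩
  · intro e he; rfl
  · intro e' he'; rfl
  · intro e he
    rw [Finset.mem_filter, h.mem_toFinset] at he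
    exact hFG ⟨e, by rw [he.1]; exact hv, he.2⟩

end QHAux

section QHAux2

open DGraph

variable {k : Type} [CommRing k] {Γ : DGraph} {H : Set Γ.V}

lemma QH_finite' {v : Γ.V} (hv : v ∉ H) (h : {e : Γ.E | Γ.s e = v}.Finite) :
    {e' : (Γ.restrict {v : Γ.V | v ∉ H}).E |
      (Γ.restrict {v : Γ.V | v ∉ H}).s e' = ⟨v, hv⟩}.Finite := by
  refine Set.Finite.subset (h.preimage (Subtype.val_injective.injOn)) ?_
  intro e' he'
  exact congrArg Subtype.val he'

lemma QH_not_sink' (hs : Γ.Saturated H) {v : Γ.V} (hv : v ∉ H)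
    (h : {e : Γ.E | Γ.s e = v}.Finite) (hns : ¬ Γ.IsSink v) :
    ¬ (Γ.restrict {v : Γ.V | v ∉ H}).IsSink ⟨v, hv⟩ := by
  have hex : ∃ e, Γ.s e = v ∧ Γ.t e ∉ H := by
    by_contra hc
    push_neg at hc
    exact hv (hs v hns h fun e hse => hc e hse)
  obtain ⟨e0, hs0, ht0⟩ := hex
  intro hsink
  exact hsink ⟨e0, by rw [hs0]; exact hv, ht0⟩ (Subtype.ext hs0)

lemma QH_rel (hh : Γ.Hereditary H) (hs : Γ.Saturated H) :
    ∀ ⦃x y⦄, LRel k Γ x y →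
      FreeAlgebra.lift k (QHfgen k Γ H) x = FreeAlgebra.lift k (QHfgen k Γ H) y := by
  intro x y hxy
  induction hxy with
  | vert_idem v =>
    simp only [map_mul, FreeAlgebra.lift_ι_apply]
    by_cases hv : v ∈ H
    · simp [QHfgen, hv]
    · simpa [QHfgen, hv, genL, map_mul] using
        RingQuot.mkAlgHom_rel k
          (LRel.vert_idem (k := k) (Γ := Γ.restrict {v : Γ.V | v ∉ H}) ⟨v, hv⟩)
  | vert_orth v w hne =>
    simp only [map_mul, FreeAlgebra.lift_ι_apply, map_zero]
    by_cases hv : v ∈ H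
    · simp [QHfgen, hv]
    · by_cases hw : w ∈ H
      · simp [QHfgen, hw]
      · simpa [QHfgen, hv, hw, genL, map_mul] using
          RingQuot.mkAlgHom_rel k
            (LRel.vert_orth (k := k) (Γ := Γ.restrict {v : Γ.V | v ∉ H}) ⟨v, hv⟩ ⟨w, hw⟩
              (fun hc => hne (congrArg Subtype.val hc)))
  | edge_src e =>
    simp only [map_mul, FreeAlgebra.lift_ι_apply]
    by_cases he : Γ.s e ∉ H ∧ Γ.t e ∉ H
    · simpa [QHfgen, he, he.1, genL, map_mul] using
        RingQuot.mkAlgHom_rel k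
          (LRel.edge_src (k := k) (Γ := Γ.restrict {v : Γ.V | v ∉ H}) ⟨e, he⟩)
    · simp [QHfgen, he]
  | edge_trg e =>
    simp only [map_mul, FreeAlgebra.lift_ι_apply]
    by_cases he : Γ.s e ∉ H ∧ Γ.t e ∉ H
    · simpa [QHfgen, he, he.2, genL, map_mul] using
        RingQuot.mkAlgHom_rel k
          (LRel.edge_trg (k := k) (Γ := Γ.restrict {v : Γ.V | v ∉ H}) ⟨e, he⟩)
    · simp [QHfgen, he]
  | ghost_src e =>
    simp only [map_mul, FreeAlgebra.lift_ι_apply]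
    by_cases he : Γ.s e ∉ H ∧ Γ.t e ∉ H
    · simpa [QHfgen, he, he.2, genL, map_mul] using
        RingQuot.mkAlgHom_rel k
          (LRel.ghost_src (k := k) (Γ := Γ.restrict {v : Γ.V | v ∉ H}) ⟨e, he⟩)
    · simp [QHfgen, he]
  | ghost_trg e =>
    simp only [map_mul, FreeAlgebra.lift_ι_apply]
    by_cases he : Γ.s e ∉ H ∧ Γ.t e ∉ H
    · simpa [QHfgen, he, he.1, genL, map_mul] using
        RingQuot.mkAlgHom_rel k
          (LRel.ghost_trg (k := k) (Γ := Γ.restrict {v : Γ.V | v ∉ H}) ⟨e, he⟩)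
    · simp [QHfgen, he]
  | ck1_same e =>
    simp only [map_mul, FreeAlgebra.lift_ι_apply]
    by_cases he : Γ.s e ∉ H ∧ Γ.t e ∉ H
    · simpa [QHfgen, he, he.2, genL, map_mul] using
        RingQuot.mkAlgHom_rel k
          (LRel.ck1_same (k := k) (Γ := Γ.restrict {v : Γ.V | v ∉ H}) ⟨e, he⟩)
    · have ht : Γ.t e ∈ H := by
        rcases not_and_or.mp he with h1 | h1
        · exact QH_hered_edge hh e (not_not.mp h1)
        · exact not_not.mp h1
      simp [QHfgen, he, ht]
  | ck1_diff e f hef =>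
    simp only [map_mul, FreeAlgebra.lift_ι_apply, map_zero]
    by_cases he : Γ.s e ∉ H ∧ Γ.t e ∉ H
    · by_cases hf : Γ.s f ∉ H ∧ Γ.t f ∉ H
      · simpa [QHfgen, he, hf, genL, map_mul] using
          RingQuot.mkAlgHom_rel k
            (LRel.ck1_diff (k := k) (Γ := Γ.restrict {v : Γ.V | v ∉ H}) ⟨e, he⟩ ⟨f, hf⟩
              (fun hc => hef (congrArg Subtype.val hc)))
      · simp [QHfgen, hf]
    · simp [QHfgen, he]
  | ck2 v h hns =>
    simp only [map_sum, map_mul, FreeAlgebra.lift_ι_apply]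
    by_cases hv : v ∈ H
    · rw [show QHfgen k Γ H (Gen.vert v) = 0 by simp [QHfgen, hv]]
      symm
      apply Finset.sum_eq_zero
      intro e he
      rw [h.mem_toFinset] at he
      have : ¬ (Γ.s e ∉ H ∧ Γ.t e ∉ H) := fun hc => hc.1 (by rw [he]; exact hv)
      simp [QHfgen, this]
    · have h' := QH_finite' hv h
      have hns' := QH_not_sink' hs hv h hns
      have key := RingQuot.mkAlgHom_rel k
        (LRel.ck2 (k := k) (Γ := Γ.restrict {v : Γ.V | v ∉ H}) ⟨v, hv⟩ h' hns')
      simp only [map_sum, map_mul] at key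
      rw [show QHfgen k Γ H (Gen.vert v)
          = genL k (Γ.restrict {v : Γ.V | v ∉ H}) (Gen.vert ⟨v, hv⟩) by simp [QHfgen, hv],
        genL, key]
      refine (QH_sum_edges hv h h'
        (fun e => QHfgen k Γ H (Gen.edge e) * QHfgen k Γ H (Gen.ghost e))
        (fun e' => RingQuot.mkAlgHom k _ (FreeAlgebra.ι k (Gen.edge e')) *
          RingQuot.mkAlgHom k _ (FreeAlgebra.ι k (Gen.ghost e')))
        ?_ ?_).symm
      · intro e hse hte
        have : ¬ (Γ.s e ∉ H ∧ Γ.t e ∉ H) := fun hc => hc.2 hte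
        simp [QHfgen, this]
      · intro e'
        have he2 : Γ.s e'.1 ∉ H ∧ Γ.t e'.1 ∉ H := e'.2
        simp [QHfgen, genL, he2]

end QHAux2

section QHAux3

open DGraph

variable (k : Type) [CommRing k] (Γ : DGraph) (H : Set Γ.V)

/-- The two-sided ideal generated by the vertices in `H`. -/
def QHI : TwoSidedIdeal (LV k Γ) :=
  TwoSidedIdeal.span {y : LV k Γ | ∃ v ∈ H, y = genL k Γ (Gen.vert v)}

/-- The quotient ring `L_k(Γ)/(H)`. -/
abbrev QHQ : Type := (QHI k Γ H).ringCon.Quotient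

/-- Projection onto the quotient. -/
def QHpi : LV k Γ →+* QHQ k Γ H := RingCon.mk' _

lemma QHpi_surj : Function.Surjective (QHpi k Γ H) := fun x =>
  Quotient.inductionOn' x fun y => ⟨y, rfl⟩

noncomputable instance QHQ.algebra : Algebra k (QHQ k Γ H) :=
  RingHom.toAlgebra' ((QHpi k Γ H).comp (algebraMap k (LV k Γ))) (by
    intro c x
    obtain ⟨y, rfl⟩ := QHpi_surj k Γ H x
    rw [RingHom.comp_apply, ← map_mul, ← map_mul, Algebra.commutes])

/-- Projection as an algebra homomorphism. -/
noncomputable def QHpiA : LV k Γ →ₐ[k] QHQ k Γ H :=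
  { QHpi k Γ H with commutes' := fun _ => rfl }

variable {k Γ H}

lemma QHpi_zero {x : LV k Γ} : QHpi k Γ H x = 0 ↔ x ∈ QHI k Γ H := by
  conv_rhs => rw [← TwoSidedIdeal.ker_ringCon_mk' (QHI k Γ H)]
  exact (TwoSidedIdeal.mem_ker _).symm

lemma QH_memI_vert {v : Γ.V} (hv : v ∈ H) : genL k Γ (Gen.vert v) ∈ QHI k Γ H :=
  TwoSidedIdeal.subset_span ⟨v, hv, rfl⟩

lemma QH_memI_edge {e : Γ.E} (ht : Γ.t e ∈ H) : genL k Γ (Gen.edge e) ∈ QHI k Γ H := by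
  have heq : genL k Γ (Gen.edge e)
      = genL k Γ (Gen.edge e) * genL k Γ (Gen.vert (Γ.t e)) := by
    simpa [genL, map_mul] using (RingQuot.mkAlgHom_rel k (LRel.edge_trg (k := k) e)).symm
  rw [heq]
  exact (QHI k Γ H).mul_mem_left _ _ (QH_memI_vert ht)

lemma QH_memI_ghost {e : Γ.E} (ht : Γ.t e ∈ H) : genL k Γ (Gen.ghost e) ∈ QHI k Γ H := by
  have heq : genL k Γ (Gen.ghost e)
      = genL k Γ (Gen.vert (Γ.t e)) * genL k Γ (Gen.ghost e) := by
    simpa [genL, map_mul] using (RingQuot.mkAlgHom_rel k (LRel.ghost_src (k := k) e)).symm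
  rw [heq]
  exact (QHI k Γ H).mul_mem_right _ _ (QH_memI_vert ht)

variable (k Γ H)

/-- The generator map `L_k(Γ_{/H}) → L_k(Γ)/(H)`. -/
noncomputable def QHggen : Gen (Γ.restrict {v : Γ.V | v ∉ H}) → QHQ k Γ H
  | .vert v => QHpi k Γ H (genL k Γ (.vert v.1))
  | .edge e => QHpi k Γ H (genL k Γ (.edge e.1))
  | .ghost e => QHpi k Γ H (genL k Γ (.ghost e.1))

variable {k Γ H}

lemma QH_rel' (hrf : Γ.RowFinite) :
    ∀ ⦃x y⦄, LRel k (Γ.restrict {v : Γ.V | v ∉ H}) x y →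
      FreeAlgebra.lift k (QHggen k Γ H) x = FreeAlgebra.lift k (QHggen k Γ H) y := by
  intro x y hxy
  induction hxy with
  | vert_idem v =>
    simpa [map_mul, FreeAlgebra.lift_ι_apply, QHggen, genL] using
      congrArg (QHpi k Γ H) (RingQuot.mkAlgHom_rel k (LRel.vert_idem (k := k) (Γ := Γ) v.1))
  | vert_orth v w hne =>
    simpa [map_mul, FreeAlgebra.lift_ι_apply, QHggen, genL] using
      congrArg (QHpi k Γ H)
        (RingQuot.mkAlgHom_rel k (LRel.vert_orth (k := k) (Γ := Γ) v.1 w.1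
          (fun hc => hne (Subtype.ext hc))))
  | edge_src e =>
    simpa [map_mul, FreeAlgebra.lift_ι_apply, QHggen, genL] using
      congrArg (QHpi k Γ H) (RingQuot.mkAlgHom_rel k (LRel.edge_src (k := k) (Γ := Γ) e.1))
  | edge_trg e =>
    simpa [map_mul, FreeAlgebra.lift_ι_apply, QHggen, genL] using
      congrArg (QHpi k Γ H) (RingQuot.mkAlgHom_rel k (LRel.edge_trg (k := k) (Γ := Γ) e.1))
  | ghost_src e =>
    simpa [map_mul, FreeAlgebra.lift_ι_apply, QHggen, genL] using
      congrArg (QHpi k Γ H) (RingQuot.mkAlgHom_rel k (LRel.ghost_src (k := k) (Γ := Γ) e.1))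
  | ghost_trg e =>
    simpa [map_mul, FreeAlgebra.lift_ι_apply, QHggen, genL] using
      congrArg (QHpi k Γ H) (RingQuot.mkAlgHom_rel k (LRel.ghost_trg (k := k) (Γ := Γ) e.1))
  | ck1_same e =>
    simpa [map_mul, FreeAlgebra.lift_ι_apply, QHggen, genL] using
      congrArg (QHpi k Γ H) (RingQuot.mkAlgHom_rel k (LRel.ck1_same (k := k) (Γ := Γ) e.1))
  | ck1_diff e f hne =>
    simpa [map_mul, FreeAlgebra.lift_ι_apply, QHggen, genL] using
      congrArg (QHpi k Γ H)
        (RingQuot.mkAlgHom_rel k (LRel.ck1_diff (k := k) (Γ := Γ) e.1 f.1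
          (fun hc => hne (Subtype.ext hc))))
  | ck2 v h' hns' =>
    simp only [map_sum, map_mul, FreeAlgebra.lift_ι_apply]
    have hv : v.1 ∉ H := v.2
    have hns : ¬ Γ.IsSink v.1 := by
      intro hsink
      apply hns'
      intro e' he'
      exact absurd (congrArg Subtype.val he') (hsink e'.1)
    have key := congrArg (QHpi k Γ H)
      (RingQuot.mkAlgHom_rel k (LRel.ck2 (k := k) (Γ := Γ) v.1 (hrf v.1) hns))
    simp only [map_sum, map_mul] at key
    rw [show QHggen k Γ H (Gen.vert v) = QHpi k Γ H (genL k Γ (.vert v.1)) from rfl,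
      genL, key]
    exact QH_sum_edges hv (hrf v.1) h'
      (fun e => QHpi k Γ H (RingQuot.mkAlgHom k (LRel k Γ) (FreeAlgebra.ι k (Gen.edge e))) *
        QHpi k Γ H (RingQuot.mkAlgHom k (LRel k Γ) (FreeAlgebra.ι k (Gen.ghost e))))
      (fun e' => QHggen k Γ H (Gen.edge e') * QHggen k Γ H (Gen.ghost e'))
      (fun e _ ht => by
        have h1 : QHpi k Γ H (genL k Γ (Gen.edge e)) = 0 := QHpi_zero.mpr (QH_memI_edge ht)
        rw [genL] at h1
        simp only [h1, zero_mul])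
      (fun e' => rfl)

end QHAux3

open DGraph in
/-- for a hereditary saturated `H ⊆ V`, `L_k(Γ_{/H}) ≅ L_k(Γ)/(H)` as
ℤ-graded *-algebras.  The isomorphism is encoded by a surjective algebra homomorphism
`φ : L_k(Γ) → L_k(Γ_{/H})` whose kernel is the two-sided ideal generated by `H` and
which maps generators to the corresponding generators (hence is automatically
compatible with the ℤ-grading and the involution `*`). -/
theorem quotient_by_hereditary_saturated (k : Type) [CommRing k] (Γ : DGraph)
    (hrf : Γ.RowFinite) (H : Set Γ.V) (hh : Γ.Hereditary H) (hs : Γ.Saturated H) :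
    ∃ φ : LV k Γ →ₐ[k] LV k (Γ.restrict {v : Γ.V | v ∉ H}),
      Function.Surjective φ ∧
      (∀ x : LV k Γ, φ x = 0 ↔
        x ∈ TwoSidedIdeal.span {y : LV k Γ | ∃ v ∈ H, y = genL k Γ (Gen.vert v)}) ∧
      (∀ (v : Γ.V) (h : v ∉ H),
        φ (genL k Γ (Gen.vert v)) =
          genL k (Γ.restrict {v : Γ.V | v ∉ H}) (Gen.vert ⟨v, h⟩)) ∧
      (∀ v ∈ H, φ (genL k Γ (Gen.vert v)) = 0) ∧
      (∀ (e : Γ.E) (h : Γ.s e ∉ H ∧ Γ.t e ∉ H),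
        φ (genL k Γ (Gen.edge e)) =
          genL k (Γ.restrict {v : Γ.V | v ∉ H}) (Gen.edge ⟨e, h⟩) ∧
        φ (genL k Γ (Gen.ghost e)) =
          genL k (Γ.restrict {v : Γ.V | v ∉ H}) (Gen.ghost ⟨e, h⟩)) ∧
      (∀ e : Γ.E, (Γ.s e ∈ H ∨ Γ.t e ∈ H) →
        φ (genL k Γ (Gen.edge e)) = 0 ∧ φ (genL k Γ (Gen.ghost e)) = 0) := by 
  classical
  set φ : LV k Γ →ₐ[k] LV k (Γ.restrict {v : Γ.V | v ∉ H}) :=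
    RingQuot.liftAlgHom k ⟨FreeAlgebra.lift k (QHfgen k Γ H), QH_rel hh hs⟩ with hφ
  have φ_gen : ∀ g : Gen Γ, φ (genL k Γ g) = QHfgen k Γ H g := by
    intro g
    rw [genL, hφ, RingQuot.liftAlgHom_mkAlgHom_apply, FreeAlgebra.lift_ι_apply]
  set ψ : LV k (Γ.restrict {v : Γ.V | v ∉ H}) →ₐ[k] QHQ k Γ H :=
    RingQuot.liftAlgHom k ⟨FreeAlgebra.lift k (QHggen k Γ H), QH_rel' hrf⟩ with hψ
  have ψ_gen : ∀ g : Gen (Γ.restrict {v : Γ.V | v ∉ H}),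
      ψ (genL k (Γ.restrict {v : Γ.V | v ∉ H}) g) = QHggen k Γ H g := by
    intro g
    rw [genL, hψ, RingQuot.liftAlgHom_mkAlgHom_apply, FreeAlgebra.lift_ι_apply]
  have comp : ∀ x : LV k Γ, ψ (φ x) = QHpi k Γ H x := by
    have : ψ.comp φ = QHpiA k Γ H := by
      refine RingQuot.ringQuot_ext' k _ _ ?_
      refine FreeAlgebra.hom_ext (funext fun g => ?_)
      have lhs : (ψ.comp φ).comp (RingQuot.mkAlgHom k (LRel k Γ)) (FreeAlgebra.ι k g)
          = ψ (φ (genL k Γ g)) := rfl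
      have rhs : (QHpiA k Γ H).comp (RingQuot.mkAlgHom k (LRel k Γ)) (FreeAlgebra.ι k g)
          = QHpi k Γ H (genL k Γ g) := rfl
      show (ψ.comp φ).comp (RingQuot.mkAlgHom k (LRel k Γ)) (FreeAlgebra.ι k g)
          = (QHpiA k Γ H).comp (RingQuot.mkAlgHom k (LRel k Γ)) (FreeAlgebra.ι k g)
      rw [lhs, rhs, φ_gen]
      cases g with
      | vert v =>
        by_cases hv : v ∈ H
        · rw [show QHfgen k Γ H (Gen.vert v) = 0 by simp [QHfgen, hv], map_zero]
          exact (QHpi_zero.mpr (QH_memI_vert hv)).symm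
        · rw [show QHfgen k Γ H (Gen.vert v)
              = genL k (Γ.restrict {v : Γ.V | v ∉ H}) (Gen.vert ⟨v, hv⟩) by
            simp [QHfgen, hv], ψ_gen]
          rfl
      | edge e =>
        by_cases he : Γ.s e ∉ H ∧ Γ.t e ∉ H
        · rw [show QHfgen k Γ H (Gen.edge e)
              = genL k (Γ.restrict {v : Γ.V | v ∉ H}) (Gen.edge ⟨e, he⟩) by
            simp [QHfgen, he], ψ_gen]
          rfl
        · have ht : Γ.t e ∈ H := by
            rcases not_and_or.mp he with h1 | h1
            · exact QH_hered_edge hh e (not_not.mp h1)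
            · exact not_not.mp h1
          rw [show QHfgen k Γ H (Gen.edge e) = 0 by simp [QHfgen, he], map_zero]
          exact (QHpi_zero.mpr (QH_memI_edge ht)).symm
      | ghost e =>
        by_cases he : Γ.s e ∉ H ∧ Γ.t e ∉ H
        · rw [show QHfgen k Γ H (Gen.ghost e)
              = genL k (Γ.restrict {v : Γ.V | v ∉ H}) (Gen.ghost ⟨e, he⟩) by
            simp [QHfgen, he], ψ_gen]
          rfl
        · have ht : Γ.t e ∈ H := by
            rcases not_and_or.mp he with h1 | h1
            · exact QH_hered_edge hh e (not_not.mp h1)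
            · exact not_not.mp h1
          rw [show QHfgen k Γ H (Gen.ghost e) = 0 by simp [QHfgen, he], map_zero]
          exact (QHpi_zero.mpr (QH_memI_ghost ht)).symm
    intro x
    exact AlgHom.congr_fun this x
  refine ⟨φ, ?_, ?_, ?_, ?_, ?_, ?_⟩
  · -- surjectivity
    intro y
    obtain ⟨x, rfl⟩ := RingQuot.mkAlgHom_surjective k
      (LRel k (Γ.restrict {v : Γ.V | v ∉ H})) y
    suffices hmem : RingQuot.mkAlgHom k (LRel k (Γ.restrict {v : Γ.V | v ∉ H})) x ∈ φ.range by
      obtain ⟨a, ha⟩ := hmem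
      exact ⟨a, ha⟩
    induction x using FreeAlgebra.induction with
    | grade0 r =>
      rw [AlgHom.commutes]
      exact φ.range.algebraMap_mem r
    | grade1 g =>
      cases g with
      | vert v =>
        refine ⟨genL k Γ (Gen.vert v.1), ?_⟩
        show φ (genL k Γ (Gen.vert v.1)) = _
        have hv : v.1 ∉ H := v.2
        rw [φ_gen]
        simp [QHfgen, hv, genL]
      | edge e =>
        refine ⟨genL k Γ (Gen.edge e.1), ?_⟩
        show φ (genL k Γ (Gen.edge e.1)) = _
        have he : Γ.s e.1 ∉ H ∧ Γ.t e.1 ∉ H := e.2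
        rw [φ_gen]
        simp [QHfgen, he, genL]
      | ghost e =>
        refine ⟨genL k Γ (Gen.ghost e.1), ?_⟩
        show φ (genL k Γ (Gen.ghost e.1)) = _
        have he : Γ.s e.1 ∉ H ∧ Γ.t e.1 ∉ H := e.2
        rw [φ_gen]
        simp [QHfgen, he, genL]
    | mul a b ha hb =>
      rw [map_mul]
      exact mul_mem ha hb
    | add a b ha hb =>
      rw [map_add]
      exact add_mem ha hb
  · -- kernel
    intro x
    constructor
    · intro hx
      have h0 : QHpi k Γ H x = 0 := by rw [← comp x, hx, map_zero]
      exact QHpi_zero.mp h0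
    · intro hx
      have : x ∈ TwoSidedIdeal.ker φ := by
        refine TwoSidedIdeal.mem_span_iff.mp hx _ ?_
        rintro y ⟨v, hv, rfl⟩
        rw [SetLike.mem_coe, TwoSidedIdeal.mem_ker, φ_gen]
        simp [QHfgen, hv]
      exact (TwoSidedIdeal.mem_ker _).mp this
  · intro v h
    rw [φ_gen]
    simp [QHfgen, h]
  · intro v hv
    rw [φ_gen]
    simp [QHfgen, hv]
  · intro e he
    constructor <;> (rw [φ_gen]; simp [QHfgen, he])
  · intro e he
    have hne : ¬ (Γ.s e ∉ H ∧ Γ.t e ∉ H) := by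
      rcases he with h1 | h1
      · exact fun hc => hc.1 h1
      · exact fun hc => hc.2 h1
    constructor <;> (rw [φ_gen]; simp [QHfgen, hne])
end

section
/- The k-algebra homomorphism from the path algebra kΓ to the Leavitt path algebra L_k(Γ) sending every vertex and every arrow to itself is injective. -/
/-!
`L_k(Γ)` acts on the free `k`-module on the pairs `(x, n)` of a maximal path `x` of `Γ`
(infinite, or finite and ending at a sink) and an integer `n`: a vertex `v` fixes the `(x, n)`
with `x` starting at `v`, an arrow `e` prepends `e` to `x` and raises `n` by one, a ghost arrow
`e*` strips a leading `e` from `x` and lowers `n` by one, and all other basis vectors are sent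
to `0`. (CK2) holds because a maximal path through a vertex that is not a sink leaves it along
one of its arrows. A path `p` then sends `(x, 0)` to `(p x, |p|)` if `x` starts at the end of
`p`, and to `0` otherwise; and `(p x, |p|)` determines `p`. So, choosing a maximal path `x_q`
from the end of each path `q`, the coefficient of `(q x_q, |q|)` in `a · (x_q, 0)` is a linear
functional on `L_k(Γ)` that is `1` at `q` and `0` at every other path.
-/

namespace Finsupp

variable (k : Type) [Semiring k] {β : Type}

noncomputable def partialEnd (φ : β → Option β) : Module.End k (β →₀ k) :=
  Finsupp.lift (β →₀ k) k β fun b => (φ b).elim 0 (single · 1)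

lemma partialEnd_single (φ : β → Option β) (b : β) (c : k) :
    partialEnd k φ (single b c) = (φ b).elim 0 (single · c) := by
  rw [partialEnd, lift_apply, sum_single_index (by simp)]
  cases φ b <;> simp

lemma partialEnd_mul (φ ψ : β → Option β) :
    partialEnd k φ * partialEnd k ψ = partialEnd k fun b => (ψ b).bind φ := by
  refine lhom_ext fun b c => ?_
  rw [Module.End.mul_apply, partialEnd_single, partialEnd_single]
  cases ψ b <;> simp [partialEnd_single]

lemma partialEnd_none : partialEnd k (fun _ : β => none) = 0 :=
  lhom_ext fun b c => by simp [partialEnd_single]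

end Finsupp

namespace DGraph

attribute [ext] Path

variable {Γ : DGraph}

def IsStep (u : Γ.V) : Option Γ.E → Γ.V → Prop
  | some e, w => Γ.s e = u ∧ Γ.t e = w
  | none, w => Γ.IsSink u ∧ w = u

lemma exists_isStep (u : Γ.V) : ∃ a : Option Γ.E × Γ.V, IsStep u a.1 a.2 := by
  by_cases hu : Γ.IsSink u
  · exact ⟨(none, u), hu, rfl⟩
  · obtain ⟨e, he⟩ : ∃ e, Γ.s e = u := by simpa [IsSink] using hu
    exact ⟨(some e, Γ.t e), he, rfl⟩

/-- A maximal path, as its streams of vertices and arrows; a finite maximal path ends at a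
sink and continues with the arrow `none` forever. -/
@[ext]
structure MaxPath (Γ : DGraph) : Type where
  vtx : Stream' Γ.V
  arr : Stream' (Option Γ.E)
  isStep : ∀ n, IsStep (vtx.get n) (arr.get n) (vtx.get (n + 1))

namespace MaxPath

def src (x : MaxPath Γ) : Γ.V := x.vtx.head

def tail (x : MaxPath Γ) : MaxPath Γ := ⟨x.vtx.tail, x.arr.tail, fun n => x.isStep (n + 1)⟩

lemma isStep_head (x : MaxPath Γ) : IsStep x.src x.arr.head x.tail.src := x.isStep 0

lemma s_eq_src {x : MaxPath Γ} {e : Γ.E} (h : x.arr.head = some e) : Γ.s e = x.src :=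
  (h ▸ x.isStep_head).1

lemma t_eq_tail_src {x : MaxPath Γ} {e : Γ.E} (h : x.arr.head = some e) :
    Γ.t e = x.tail.src :=
  (h ▸ x.isStep_head).2

lemma isSink_src {x : MaxPath Γ} (h : x.arr.head = none) : Γ.IsSink x.src :=
  (h ▸ x.isStep_head).1

lemma head_append_vtx {v : Γ.V} {l : List Γ.E} (hw : Γ.IsWalkFrom v l) (x : MaxPath Γ)
    (ht : Γ.walkTrg v l = x.src) : (l.map Γ.s ++ₛ x.vtx).head = v := by
  cases l with
  | nil => exact ht.symm
  | cons e l => exact hw.1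

lemma isStep_append {v : Γ.V} {l : List Γ.E} (hw : Γ.IsWalkFrom v l) (x : MaxPath Γ)
    (ht : Γ.walkTrg v l = x.src) (n : ℕ) :
    IsStep ((l.map Γ.s ++ₛ x.vtx).get n) ((l.map some ++ₛ x.arr).get n)
      ((l.map Γ.s ++ₛ x.vtx).get (n + 1)) := by
  induction l generalizing v n with
  | nil => exact x.isStep n
  | cons e l ih =>
    cases n with
    | zero => exact ⟨rfl, (head_append_vtx hw.2 x ht).symm⟩
    | succ n => exact ih hw.2 ht n

def prepend (v : Γ.V) (l : List Γ.E) (hw : Γ.IsWalkFrom v l) (x : MaxPath Γ)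
    (ht : Γ.walkTrg v l = x.src) : MaxPath Γ :=
  ⟨l.map Γ.s ++ₛ x.vtx, l.map some ++ₛ x.arr, isStep_append hw x ht⟩

lemma src_prepend {v : Γ.V} {l : List Γ.E} (hw : Γ.IsWalkFrom v l) (x : MaxPath Γ)
    (ht : Γ.walkTrg v l = x.src) : (prepend v l hw x ht).src = v :=
  head_append_vtx hw x ht

def cons (e : Γ.E) (x : MaxPath Γ) (h : Γ.t e = x.src) : MaxPath Γ :=
  prepend (Γ.s e) [e] ⟨rfl, trivial⟩ x h

@[simp] lemma src_cons (e : Γ.E) (x : MaxPath Γ) (h : Γ.t e = x.src) :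
    (x.cons e h).src = Γ.s e :=
  rfl

@[simp] lemma arr_head_cons (e : Γ.E) (x : MaxPath Γ) (h : Γ.t e = x.src) :
    (x.cons e h).arr.head = some e :=
  rfl

lemma prepend_cons {v : Γ.V} {e : Γ.E} {l : List Γ.E} (hw : Γ.IsWalkFrom v (e :: l))
    (x : MaxPath Γ) (ht : Γ.walkTrg v (e :: l) = x.src) :
    prepend v (e :: l) hw x ht =
      (prepend (Γ.t e) l hw.2 x ht).cons e (src_prepend hw.2 x ht).symm :=
  rfl

@[simp] lemma tail_cons (e : Γ.E) (x : MaxPath Γ) (h : Γ.t e = x.src) : (x.cons e h).tail = x :=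
  rfl

lemma cons_tail {x : MaxPath Γ} {e : Γ.E} (h : x.arr.head = some e) :
    x.tail.cons e (t_eq_tail_src h) = x := by
  ext1
  · change Stream'.cons (Γ.s e) x.vtx.tail = x.vtx
    rw [s_eq_src h, src, Stream'.eta]
  · change Stream'.cons (some e) x.arr.tail = x.arr
    rw [← h, Stream'.eta]

lemma prepend_injective {v v' : Γ.V} {l l' : List Γ.E} {hw : Γ.IsWalkFrom v l}
    {hw' : Γ.IsWalkFrom v' l'} {x x' : MaxPath Γ} {ht : Γ.walkTrg v l = x.src}
    {ht' : Γ.walkTrg v' l' = x'.src} (h : prepend v l hw x ht = prepend v' l' hw' x' ht')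
    (hlen : l.length = l'.length) : v = v' ∧ l = l' := by
  refine ⟨by rw [← src_prepend hw x ht, h, src_prepend], ?_⟩
  have harr := Stream'.append_left_injective _ _ _ _ (congrArg MaxPath.arr h) (by simpa using hlen)
  exact List.map_injective_iff.2 (Option.some_injective _) harr

noncomputable def nextStep (u : Γ.V) : Option Γ.E × Γ.V := (exists_isStep u).choose

noncomputable def ofVertex (v : Γ.V) : MaxPath Γ where
  vtx := Stream'.iterate (fun u => (nextStep u).2) v
  arr := (Stream'.iterate (fun u => (nextStep u).2) v).map fun u => (nextStep u).1
  isStep _ := (exists_isStep _).choose_spec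

lemma src_ofVertex (v : Γ.V) : (ofVertex v).src = v := rfl

end MaxPath

open Classical in
/-- The integer `n` counts arrows prepended minus arrows stripped; it tells `p x` from `p' x`
when `x` is periodic. -/
noncomputable def Gen.move : Gen Γ → MaxPath Γ × ℤ → Option (MaxPath Γ × ℤ)
  | .vert v, (x, n) => if v = x.src then some (x, n) else none
  | .edge e, (x, n) => if h : Γ.t e = x.src then some (x.cons e h, n + 1) else none
  | .ghost e, (x, n) => if x.arr.head = some e then some (x.tail, n - 1) else none

section Representation

open Finsupp (partialEnd partialEnd_single partialEnd_mul partialEnd_none)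

variable (k : Type) [CommRing k]

noncomputable def genAct (g : Gen Γ) : Module.End k (MaxPath Γ × ℤ →₀ k) :=
  partialEnd k g.move

open Classical in
lemma genAct_edge_mul_genAct_ghost (e : Γ.E) :
    genAct k (.edge e) * genAct k (.ghost e) =
      partialEnd k fun b => if b.1.arr.head = some e then some b else none := by
  rw [genAct, genAct, partialEnd_mul]
  congr 1
  funext ⟨x, n⟩
  by_cases h : x.arr.head = some e
  · simp [Gen.move, h, MaxPath.t_eq_tail_src h, MaxPath.cons_tail h]
  · simp [Gen.move, h]

lemma sum_genAct_edge_mul_genAct_ghost {v : Γ.V} (hfin : {e : Γ.E | Γ.s e = v}.Finite)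
    (hv : ¬ Γ.IsSink v) :
    ∑ e ∈ hfin.toFinset, genAct k (.edge e) * genAct k (.ghost e) = genAct k (.vert v) := by
  classical
  refine Finsupp.lhom_ext fun ⟨x, n⟩ c => ?_
  simp only [genAct_edge_mul_genAct_ghost]
  simp only [LinearMap.sum_apply, partialEnd_single, genAct, Gen.move]
  rcases hx : x.arr.head with _ | e₀
  · have hne : v ≠ x.src := fun h => hv (h ▸ MaxPath.isSink_src hx)
    simp [hne]
  · have hsrc := MaxPath.s_eq_src hx
    by_cases hvx : v = x.src
    · rw [Finset.sum_eq_single_of_mem e₀ (by simp [hsrc, hvx])]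
      · simp [hvx]
      · intro e _ he
        simp [Ne.symm he]
    · rw [Finset.sum_eq_zero fun e he => ?_]
      · simp [hvx]
      · have : e₀ ≠ e := by rintro rfl; simp_all
        simp [this]

theorem lift_genAct_eq_of_lRel ⦃a b : FreeAlgebra k (Gen Γ)⦄ (h : LRel k Γ a b) :
    FreeAlgebra.lift k (genAct k) a = FreeAlgebra.lift k (genAct k) b := by
  induction h with
  | ck2 v hfin hv => simpa using (sum_genAct_edge_mul_genAct_ghost k hfin hv).symm
  | _ =>
    simp only [map_mul, map_zero, FreeAlgebra.lift_ι_apply, genAct, partialEnd_mul,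
      ← partialEnd_none k]
    congr 1
    funext ⟨x, n⟩
    simp only [Gen.move]
    split_ifs <;> grind [Gen.move, MaxPath.s_eq_src, MaxPath.t_eq_tail_src, MaxPath.src_cons,
      MaxPath.arr_head_cons, MaxPath.tail_cons]

noncomputable def rep : LV k Γ →ₐ[k] Module.End k (MaxPath Γ × ℤ →₀ k) :=
  RingQuot.liftAlgHom k ⟨FreeAlgebra.lift k (genAct k), lift_genAct_eq_of_lRel k⟩

lemma rep_genL (g : Gen Γ) : rep k (genL k Γ g) = genAct k g := by
  rw [rep, genL, RingQuot.liftAlgHom_mkAlgHom_apply, FreeAlgebra.lift_ι_apply]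

lemma wordElem_genL_cons {v : Γ.V} {e : Γ.E} (he : Γ.s e = v) (l : List Γ.E) :
    wordElem Γ (genL k Γ) v (e :: l) =
      genL k Γ (.edge e) * wordElem Γ (genL k Γ) (Γ.t e) l := by
  have hsrc : genL k Γ (.vert (Γ.s e)) * genL k Γ (.edge e) = genL k Γ (.edge e) := by
    simpa only [genL, map_mul] using RingQuot.mkAlgHom_rel k (LRel.edge_src (k := k) e)
  have htrg : genL k Γ (.edge e) * genL k Γ (.vert (Γ.t e)) = genL k Γ (.edge e) := by
    simpa only [genL, map_mul] using RingQuot.mkAlgHom_rel k (LRel.edge_trg (k := k) e)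
  subst he
  simp only [wordElem, List.map_cons, List.prod_cons, ← mul_assoc, hsrc]
  conv_lhs => rw [← htrg]

open Classical in
lemma rep_wordElem_single {v : Γ.V} {l : List Γ.E} (hw : Γ.IsWalkFrom v l) (x : MaxPath Γ)
    (n : ℤ) (c : k) :
    rep k (wordElem Γ (genL k Γ) v l) (Finsupp.single (x, n) c) =
      if h : Γ.walkTrg v l = x.src then
        Finsupp.single (MaxPath.prepend v l hw x h, n + l.length) c
      else 0 := by
  induction l generalizing v with
  | nil =>
    simp only [wordElem, rep_genL, List.map_nil, List.prod_nil, mul_one, genAct,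
      partialEnd_single, Gen.move, walkTrg, List.length_nil, Nat.cast_zero, add_zero]
    split_ifs <;> rfl
  | cons e l ih =>
    rw [wordElem_genL_cons k hw.1, map_mul, Module.End.mul_apply, ih hw.2]
    have htrg : Γ.walkTrg v (e :: l) = Γ.walkTrg (Γ.t e) l := rfl
    by_cases h : Γ.walkTrg (Γ.t e) l = x.src
    · rw [dif_pos h, dif_pos (htrg.trans h), rep_genL, genAct, partialEnd_single]
      simp only [Gen.move, MaxPath.src_prepend, dif_pos, Option.elim_some, MaxPath.prepend_cons,
        List.length_cons, Nat.cast_succ, add_assoc]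
    · rw [dif_neg h, dif_neg (htrg ▸ h), map_zero]

open Classical in
lemma rep_pElem_single (p : Path Γ) (x : MaxPath Γ) (n : ℤ) (c : k) :
    rep k (pElem (genL k Γ) p) (Finsupp.single (x, n) c) =
      if h : p.trg = x.src then
        Finsupp.single (MaxPath.prepend p.src p.edges p.valid x h, n + p.edges.length) c
      else 0 :=
  rep_wordElem_single k p.valid x n c

/-- `q ↦` the coefficient of `(q x_q, |q|)` in `a · (x_q, 0)`, where `x_q` is the chosen
maximal path from the end of `q`. -/
noncomputable def pathCoord : LV k Γ →ₗ[k] (Path Γ → k) :=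
  LinearMap.pi fun q =>
    Finsupp.lapply
        (MaxPath.prepend q.src q.edges q.valid (.ofVertex q.trg) (MaxPath.src_ofVertex q.trg).symm,
          (q.edges.length : ℤ)) ∘ₗ
      LinearMap.applyₗ (Finsupp.single (MaxPath.ofVertex q.trg, 0) 1) ∘ₗ (rep k).toLinearMap

open Classical in
lemma pathCoord_pElem (p : Path Γ) : pathCoord k (pElem (genL k Γ) p) = Pi.single p 1 := by
  funext q
  simp only [pathCoord, LinearMap.pi_apply, LinearMap.comp_apply, AlgHom.toLinearMap_apply,
    LinearMap.applyₗ_apply_apply, Finsupp.lapply_apply]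
  rw [rep_pElem_single, Pi.single_apply]
  by_cases hpq : q = p
  · subst hpq
    rw [dif_pos (MaxPath.src_ofVertex q.trg).symm, if_pos rfl, zero_add, Finsupp.single_eq_same]
  · rw [if_neg hpq]
    split_ifs with h
    · rw [Finsupp.single_apply, if_neg]
      intro heq
      obtain ⟨hpre, hlen⟩ := Prod.mk.inj heq
      obtain ⟨hsrc, hedges⟩ := MaxPath.prepend_injective hpre (by simpa using hlen)
      exact hpq (Path.ext hsrc.symm hedges.symm)
    · rfl

end Representation

end DGraph

open DGraph in
theorem path_algebra_embeds_general (k : Type) [CommRing k] (Γ : DGraph) :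
    LinearIndependent k (fun p : Path Γ => pElem (genL k Γ) p) := by
  refine LinearIndependent.of_comp (pathCoord k) ?_
  classical
  convert Pi.linearIndependent_single_one (Path Γ) k with p
  exact pathCoord_pElem k p

open DGraph in
/-- the canonical homomorphism from the path algebra `kΓ` to `L_k(Γ)`
sending every vertex and arrow to itself is injective; since the paths form a
`k`-basis of `kΓ`, this says exactly that the images of the (distinct) paths are
`k`-linearly independent in `L_k(Γ)`. -/
theorem path_algebra_embeds (k : Type) [CommRing k] (Γ : DGraph)
    (hrf : Γ.RowFinite) :
    LinearIndependent k (fun p : Path Γ => pElem (genL k Γ) p) :=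
  path_algebra_embeds_general k Γ
end
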